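/- For m = 2 projects, the Uniform Phantom mechanism is 1/2-approximate: for every preference profile V of n voters over 2 projects, the ℓ1 distance between the output of the Uniform Phantom mechanism on V and the proportional division of V is at most 1/2. -/

import Mathlib

open Finset

/-- A division among `m` projects: coordinates in `[0,1]` summing to `1`. -/
def IsDivision {m : ℕ} (x : Fin m → ℝ) : Prop :=
  (∀ j, 0 ≤ x j ∧ x j ≤ 1) ∧ ∑ j, x j = 1

/-- The ℓ1 distance between two vectors over `Fin m`. -/
noncomputable def l1 {m : ℕ} (x y : Fin m → ℝ) : ℝ := ∑ j, |x j - y j|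

/-- The proportional division (coordinatewise mean) of a profile. -/
noncomputable def propDiv {n m : ℕ} (V : Fin n → Fin m → ℝ) : Fin m → ℝ :=
  fun j => (∑ i, V i j) / (n : ℝ)

/-- The `(k+1)`-th smallest element of a multiset of reals. -/
noncomputable def medianAt (s : Multiset ℝ) (k : ℕ) : ℝ :=
  (s.sort (· ≤ ·)).getD k 0

/-- Voter reports on project `j` together with the `n+1` phantom values `p 0, …, p n`. -/
noncomputable def projValues {n m : ℕ} (V : Fin n → Fin m → ℝ)
    (p : ℕ → ℝ) (j : Fin m) : Multiset ℝ :=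
  (Multiset.map (fun i => V i j) Finset.univ.val) +
    (Multiset.map p (Finset.range (n + 1)).val)

/-- The median (the `(n+1)`-th smallest of the `2n+1` values) of the `n` voter reports
on project `j` together with the `n+1` phantom values. -/
noncomputable def phantomMedian {n m : ℕ} (V : Fin n → Fin m → ℝ)
    (p : ℕ → ℝ) (j : Fin m) : ℝ :=
  medianAt (projValues V p j) n

/-- A phantom system for `n` voters: continuous, weakly increasing functions
`y k : [0,1] → [0,1]`, `k = 0, …, n`, with `y k 0 = 0`, `y k 1 = 1`,
pointwise ordered in `k`. -/
structure PhantomSystem (n : ℕ) where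
  y : ℕ → ℝ → ℝ
  contOn : ∀ k ≤ n, ContinuousOn (y k) (Set.Icc 0 1)
  monoOn : ∀ k ≤ n, MonotoneOn (y k) (Set.Icc 0 1)
  mem_Icc : ∀ k ≤ n, ∀ t ∈ Set.Icc (0:ℝ) 1, y k t ∈ Set.Icc (0:ℝ) 1
  map_zero : ∀ k ≤ n, y k 0 = 0
  map_one : ∀ k ≤ n, y k 1 = 1
  mono_idx : ∀ t ∈ Set.Icc (0:ℝ) 1, ∀ k k', k ≤ k' → k' ≤ n → y k t ≤ y k' t

/-- `f` is the moving phantom mechanism associated with the phantom system `Y`: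
on each profile of divisions, for some `t*` making the medians sum to `1`,
it outputs on each project the median of the voter reports and the phantom values. -/
def IsMovingPhantom {n m : ℕ} (f : (Fin n → Fin m → ℝ) → (Fin m → ℝ))
    (Y : PhantomSystem n) : Prop :=
  ∀ V : Fin n → Fin m → ℝ, (∀ i, IsDivision (V i)) →
    ∃ t ∈ Set.Icc (0:ℝ) 1,
      (∑ j, phantomMedian V (fun k => Y.y k t) j) = 1 ∧
      ∀ j, f V j = phantomMedian V (fun k => Y.y k t) j

/-- Truthfulness of a budget aggregation mechanism: no voter `i` with true peak `V i`
can get an outcome closer (in ℓ1 distance) to her peak by reporting some division `v`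
instead of `V i`. -/
def Truthful {n m : ℕ} (f : (Fin n → Fin m → ℝ) → (Fin m → ℝ)) : Prop :=
  ∀ V : Fin n → Fin m → ℝ, (∀ i, IsDivision (V i)) →
    ∀ i : Fin n, ∀ v : Fin m → ℝ, IsDivision v →
      l1 (f V) (V i) ≤ l1 (f (Function.update V i v)) (V i)

/-- The ℓ1-loss of mechanism `f` on profile `V`. -/
noncomputable def loss {n m : ℕ} (f : (Fin n → Fin m → ℝ) → (Fin m → ℝ))
    (V : Fin n → Fin m → ℝ) : ℝ :=
  l1 (f V) (propDiv V)

/-- The phantom system of the Piecewise Uniform mechanism for `n` voters. -/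
noncomputable def puPhantom (n : ℕ) (k : ℕ) (t : ℝ) : ℝ :=
  if t < 1 / 2 then
    (if (k : ℝ) / (n : ℝ) < 1 / 2 then 0 else 4 * t * (k : ℝ) / (n : ℝ) - 2 * t)
  else
    (if (k : ℝ) / (n : ℝ) < 1 / 2 then (k : ℝ) * (2 * t - 1) / (n : ℝ)
     else (k : ℝ) * (3 - 2 * t) / (n : ℝ) - 2 + 2 * t)

/-- `w` is an output of the Piecewise Uniform mechanism on profile `V`. -/
def IsPUOutcome {n m : ℕ} (V : Fin n → Fin m → ℝ) (w : Fin m → ℝ) : Prop :=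
  ∃ t ∈ Set.Icc (0:ℝ) 1,
    (∑ j, phantomMedian V (fun k => puPhantom n k t) j) = 1 ∧
    ∀ j, w j = phantomMedian V (fun k => puPhantom n k t) j

/-- `w` is an output of the Independent Markets mechanism (phantoms `min (k·t) 1`)
on profile `V`. -/
def IsIMOutcome {n m : ℕ} (V : Fin n → Fin m → ℝ) (w : Fin m → ℝ) : Prop :=
  ∃ t : ℝ, 0 ≤ t ∧
    (∑ j, phantomMedian V (fun k => min ((k : ℝ) * t) 1) j) = 1 ∧
    ∀ j, w j = phantomMedian V (fun k => min ((k : ℝ) * t) 1) j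

/-- A single-minded division: it assigns the whole budget to one project. -/
def SingleMindedDiv {m : ℕ} (v : Fin m → ℝ) : Prop := ∃ j, v j = 1

/-- A double-minded division relative to an outcome `w` (three projects): it agrees with
`w` on one project `j`, proposes `1 - w j` on another project, and `0` on the third. -/
def DoubleMindedDiv (w v : Fin 3 → ℝ) : Prop :=
  ∃ j j' : Fin 3, j ≠ j' ∧ v j = w j ∧ v j' = 1 - w j ∧
    ∀ k, k ≠ j → k ≠ j' → v k = 0

/-- A three-type profile for mechanism `f`: each voter is fully-satisfied,
double-minded, or single-minded. -/
def ThreeTypeProfile {n : ℕ} (f : (Fin n → Fin 3 → ℝ) → (Fin 3 → ℝ))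
    (V : Fin n → Fin 3 → ℝ) : Prop :=
  ∀ i, V i = f V ∨ DoubleMindedDiv (f V) (V i) ∨ SingleMindedDiv (V i)

/-- The single-minded division fully supporting project `j`. -/
noncomputable def singleDiv (j : Fin 3) : Fin 3 → ℝ :=
  fun j' => if j' = j then 1 else 0

/-- The double-minded division proposing `x k` on project `k`, `1 - x k` on
project `j` and `0` on the remaining project. -/
noncomputable def doubleDiv (x : Fin 3 → ℝ) (k j : Fin 3) : Fin 3 → ℝ :=
  fun j' => if j' = k then x k else if j' = j then 1 - x k else 0

/-- A utilitarian mechanism: it always returns a division minimizing the total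
ℓ1 distance (social cost) to the voters' proposals. -/
def Utilitarian {n m : ℕ} (f : (Fin n → Fin m → ℝ) → (Fin m → ℝ)) : Prop :=
  ∀ V : Fin n → Fin m → ℝ, (∀ i, IsDivision (V i)) →
    IsDivision (f V) ∧
    ∀ x : Fin m → ℝ, IsDivision x → (∑ i, l1 (V i) (f V)) ≤ ∑ i, l1 (V i) x

/-!
For each project let `M` be the median of the `n` reports and the `n + 1` phantoms `k / n`.
At least `n + 1` of the `2n + 1` values are `≤ M`, and at most `n M + 1` of them are phantoms,
so at least `n (1 - M)` reports are `≤ M`; symmetrically at least `n M` reports are `≥ M`.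
As reports lie in `[0, 1]`, their mean `μ` satisfies `M² ≤ μ ≤ 1 - (1 - M)²`, hence
`|M - μ| ≤ M (1 - M) ≤ 1/4` on each project, and the two projects contribute at most `1/2`.
-/

theorem List.Pairwise.succ_le_countP_le_getElem {α : Type*} [LinearOrder α] {L : List α}
    (hL : L.Pairwise (· ≤ ·)) {i : ℕ} (hi : i < L.length) :
    i + 1 ≤ L.countP (· ≤ L[i]) := by
  have hle : ∀ x ∈ L.take (i + 1), x ≤ L[i] := by
    intro x hx
    obtain ⟨k, hk, rfl⟩ := List.mem_iff_getElem.1 hx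
    rw [List.getElem_take]
    exact hL.sortedLE.getElem_le_getElem_of_le (by simp at hk; omega)
  have hcount : (L.take (i + 1)).countP (· ≤ L[i]) = i + 1 := by
    rw [List.countP_eq_length.2 (by simpa using hle), List.length_take]
    omega
  exact hcount ▸ (List.take_sublist _ _).countP_le

theorem List.Pairwise.length_sub_le_countP_getElem_le {α : Type*} [LinearOrder α] {L : List α}
    (hL : L.Pairwise (· ≤ ·)) {i : ℕ} (hi : i < L.length) :
    L.length - i ≤ L.countP (L[i] ≤ ·) := by
  have hge : ∀ x ∈ L.drop i, L[i] ≤ x := by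
    intro x hx
    obtain ⟨k, hk, rfl⟩ := List.mem_iff_getElem.1 hx
    rw [List.getElem_drop]
    exact hL.sortedLE.getElem_le_getElem_of_le (by omega)
  have hcount : (L.drop i).countP (L[i] ≤ ·) = L.length - i := by
    rw [List.countP_eq_length.2 (by simpa using hge), List.length_drop]
  exact hcount ▸ (List.drop_sublist _ _).countP_le

section medianAt

variable {s : Multiset ℝ} {k : ℕ}

theorem medianAt_eq_getElem (hk : k < Multiset.card s) :
    medianAt s k = (s.sort (· ≤ ·))[k]'(by rwa [Multiset.length_sort]) :=
  List.getD_eq_getElem _ _ _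

theorem medianAt_mem (hk : k < Multiset.card s) : medianAt s k ∈ s := by
  rw [medianAt_eq_getElem hk, ← Multiset.mem_sort (· ≤ ·)]
  exact List.getElem_mem _

theorem succ_le_countP_le_medianAt (hk : k < Multiset.card s) :
    k + 1 ≤ s.countP (· ≤ medianAt s k) := by
  have h := (Multiset.pairwise_sort s (· ≤ ·)).succ_le_countP_le_getElem
    (by rwa [Multiset.length_sort])
  rwa [← Multiset.coe_countP, Multiset.sort_eq, ← medianAt_eq_getElem hk] at h

theorem card_sub_le_countP_medianAt_le (hk : k < Multiset.card s) :
    Multiset.card s - k ≤ s.countP (medianAt s k ≤ ·) := by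
  have h := (Multiset.pairwise_sort s (· ≤ ·)).length_sub_le_countP_getElem_le
    (by rwa [Multiset.length_sort])
  rw [← Multiset.coe_countP, Multiset.sort_eq, ← medianAt_eq_getElem hk] at h
  simpa using h

end medianAt

section projValues

variable {n m : ℕ} (V : Fin n → Fin m → ℝ) (p : ℕ → ℝ) (j : Fin m)

theorem card_projValues : Multiset.card (projValues V p j) = n + (n + 1) := by
  simp [projValues, add_assoc]

theorem countP_projValues (q : ℝ → Prop) [DecidablePred q] :
    (projValues V p j).countP q = #{i | q (V i j)} + #{k ∈ range (n + 1) | q (p k)} := by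
  rw [projValues, Multiset.countP_add, Multiset.countP_map, Multiset.countP_map]
  rfl

end projValues

section phantomCounts

variable {n : ℕ} {M : ℝ}

theorem card_filter_natCast_div_le (hn : (0 : ℝ) < n) (hM : 0 ≤ M) :
    (#{k ∈ range (n + 1) | ((k : ℕ) : ℝ) / n ≤ M} : ℝ) ≤ n * M + 1 := by
  have hsub : {k ∈ range (n + 1) | ((k : ℕ) : ℝ) / n ≤ M} ⊆ range (⌊n * M⌋₊ + 1) :=
    fun k hk => by
      rw [mem_range, Nat.lt_succ_iff, Nat.le_floor_iff (by positivity), ← div_le_iff₀' hn]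
      exact (mem_filter.1 hk).2
  calc _ ≤ ((⌊n * M⌋₊ + 1 : ℕ) : ℝ) := by
        exact_mod_cast (card_le_card hsub).trans (card_range _).le
    _ ≤ n * M + 1 := by push_cast; linarith [Nat.floor_le (by positivity : 0 ≤ n * M)]

theorem card_filter_le_natCast_div (hn : (0 : ℝ) < n) (hM : M ≤ 1) :
    (#{k ∈ range (n + 1) | M ≤ ((k : ℕ) : ℝ) / n} : ℝ) ≤ n * (1 - M) + 1 := by
  have hsub : {k ∈ range (n + 1) | M ≤ ((k : ℕ) : ℝ) / n} ⊆ Ico ⌈n * M⌉₊ (n + 1) :=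
    fun k hk => by
      rw [mem_filter, mem_range, le_div_iff₀' hn] at hk
      exact mem_Ico.2 ⟨Nat.ceil_le.2 hk.2, hk.1⟩
  have hceil : ⌈n * M⌉₊ ≤ n + 1 := Nat.ceil_le.2 (by push_cast; nlinarith)
  calc _ ≤ ((n + 1 - ⌈n * M⌉₊ : ℕ) : ℝ) := by
        exact_mod_cast (card_le_card hsub).trans (Nat.card_Ico _ _).le
    _ ≤ n * (1 - M) + 1 := by push_cast [Nat.cast_sub hceil]; linarith [Nat.le_ceil (n * M)]

end phantomCounts

section sumBounds

variable {ι : Type*} [Fintype ι] {x : ι → ℝ} {M : ℝ}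

theorem card_mul_sq_le_sum (hx : ∀ i, 0 ≤ x i) (hM : 0 ≤ M)
    (hcard : Fintype.card ι * M ≤ #{i | M ≤ x i}) : Fintype.card ι * M ^ 2 ≤ ∑ i, x i :=
  calc Fintype.card ι * M ^ 2 = Fintype.card ι * M * M := by ring
    _ ≤ #{i | M ≤ x i} * M := mul_le_mul_of_nonneg_right hcard hM
    _ ≤ ∑ i ∈ {i | M ≤ x i}, x i := by
        simpa using card_nsmul_le_sum _ x M fun i hi => (mem_filter.1 hi).2
    _ ≤ ∑ i, x i := sum_le_sum_of_subset_of_nonneg (filter_subset _ _) fun i _ _ => hx i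

theorem sum_le_card_mul_one_sub_sq (hx : ∀ i, x i ≤ 1) (hM : M ≤ 1)
    (hcard : Fintype.card ι * (1 - M) ≤ #{i | x i ≤ M}) :
    ∑ i, x i ≤ Fintype.card ι * (1 - (1 - M) ^ 2) := by
  have h := card_mul_sq_le_sum (x := fun i => 1 - x i) (fun i => sub_nonneg.2 (hx i))
    (sub_nonneg.2 hM) (by simpa only [sub_le_sub_iff_left] using hcard)
  rw [sum_sub_distrib] at h
  simp only [sum_const, card_univ, nsmul_eq_mul, mul_one] at h
  linarith

end sumBounds

section uniformPhantom

variable {n m : ℕ} (V : Fin n → Fin m → ℝ) (j : Fin m)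

theorem mem_Icc_of_mem_projValues_uniform (hn : 1 ≤ n) (hV : ∀ i, 0 ≤ V i j ∧ V i j ≤ 1)
    {x : ℝ} (hx : x ∈ projValues V (fun k => (k : ℝ) / n) j) : x ∈ Set.Icc 0 1 := by
  rw [projValues, Multiset.mem_add] at hx
  rcases hx with hvoter | hphantom
  · obtain ⟨i, -, rfl⟩ := Multiset.mem_map.1 hvoter
    exact hV i
  · obtain ⟨k, hk, rfl⟩ := Multiset.mem_map.1 hphantom
    have hkn : (k : ℝ) ≤ n := by exact_mod_cast Nat.lt_succ_iff.1 (mem_range.1 hk)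
    exact ⟨by positivity, div_le_one_of_le₀ hkn n.cast_nonneg⟩

theorem phantomMedian_uniform_mem_Icc (hn : 1 ≤ n) (hV : ∀ i, 0 ≤ V i j ∧ V i j ≤ 1) :
    phantomMedian V (fun k => (k : ℝ) / n) j ∈ Set.Icc 0 1 :=
  mem_Icc_of_mem_projValues_uniform V j hn hV <| medianAt_mem <| by rw [card_projValues]; omega

theorem card_mul_one_sub_le_card_le_phantomMedian (hn : 1 ≤ n)
    (hM : 0 ≤ phantomMedian V (fun k => (k : ℝ) / n) j) :
    n * (1 - phantomMedian V (fun k => (k : ℝ) / n) j) ≤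
      #{i | V i j ≤ phantomMedian V (fun k => (k : ℝ) / n) j} := by
  set M := phantomMedian V (fun k => (k : ℝ) / n) j
  have hcount := succ_le_countP_le_medianAt (s := projValues V (fun k => (k : ℝ) / n) j) (k := n)
    (by rw [card_projValues]; omega)
  rw [countP_projValues] at hcount
  have hcount' : (n : ℝ) + 1 ≤
      #{i | V i j ≤ M} + #{k ∈ range (n + 1) | ((k : ℕ) : ℝ) / n ≤ M} := by
    exact_mod_cast hcount
  linarith [card_filter_natCast_div_le (by exact_mod_cast hn) hM]

theorem mul_le_card_phantomMedian_le (hn : 1 ≤ n)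
    (hM : phantomMedian V (fun k => (k : ℝ) / n) j ≤ 1) :
    n * phantomMedian V (fun k => (k : ℝ) / n) j ≤
      #{i | phantomMedian V (fun k => (k : ℝ) / n) j ≤ V i j} := by
  set M := phantomMedian V (fun k => (k : ℝ) / n) j
  have hcount := card_sub_le_countP_medianAt_le (s := projValues V (fun k => (k : ℝ) / n) j)
    (k := n) (by rw [card_projValues]; omega)
  rw [countP_projValues, card_projValues, Nat.add_sub_cancel_left] at hcount
  have hcount' : (n : ℝ) + 1 ≤
      #{i | M ≤ V i j} + #{k ∈ range (n + 1) | M ≤ ((k : ℕ) : ℝ) / n} := by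
    exact_mod_cast hcount
  linarith [card_filter_le_natCast_div (by exact_mod_cast hn) hM]

theorem abs_phantomMedian_uniform_sub_propDiv_le (hn : 1 ≤ n)
    (hV : ∀ i, 0 ≤ V i j ∧ V i j ≤ 1) :
    |phantomMedian V (fun k => (k : ℝ) / n) j - propDiv V j| ≤ 1 / 4 := by
  obtain ⟨hM0, hM1⟩ := phantomMedian_uniform_mem_Icc V j hn hV
  set M := phantomMedian V (fun k => (k : ℝ) / n) j
  have hlow := card_mul_sq_le_sum (x := fun i => V i j) (fun i => (hV i).1) hM0
    (by simpa using mul_le_card_phantomMedian_le V j hn hM1)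
  have hup := sum_le_card_mul_one_sub_sq (x := fun i => V i j) (fun i => (hV i).2) hM1
    (by simpa using card_mul_one_sub_le_card_le_phantomMedian V j hn hM0)
  rw [Fintype.card_fin] at hlow hup
  have hnR : (0 : ℝ) < n := by exact_mod_cast hn
  have hmean_low : M ^ 2 ≤ propDiv V j := (le_div_iff₀' hnR).2 hlow
  have hmean_up : propDiv V j ≤ 1 - (1 - M) ^ 2 := (div_le_iff₀' hnR).2 hup
  rw [abs_le]
  constructor <;> nlinarith [sq_nonneg (M - 1 / 2)]

end uniformPhantom

theorem l1_phantomMedian_uniform_propDiv_le {n m : ℕ} (hn : 1 ≤ n) (V : Fin n → Fin m → ℝ)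
    (hV : ∀ i j, 0 ≤ V i j ∧ V i j ≤ 1) :
    l1 (fun j => phantomMedian V (fun k => (k : ℝ) / n) j) (propDiv V) ≤ m / 4 :=
  calc l1 (fun j => phantomMedian V (fun k => (k : ℝ) / n) j) (propDiv V)
      ≤ ∑ _j : Fin m, (1 / 4 : ℝ) :=
        sum_le_sum fun j _ => abs_phantomMedian_uniform_sub_propDiv_le V j hn fun i => hV i j
    _ = m / 4 := by simp [div_eq_mul_inv]

/-- For `m = 2` projects, the Uniform Phantom mechanism (phantoms
`k/n`, `k = 0, …, n`) is `1/2`-approximate: on every profile, the ℓ1 distance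
between its output and the proportional division is at most `1/2`. -/
theorem uniform_phantom_half_approximate {n : ℕ} (hn : 1 ≤ n)
    (V : Fin n → Fin 2 → ℝ) (hV : ∀ i, IsDivision (V i)) :
    l1 (fun j => phantomMedian V (fun k => (k : ℝ) / (n : ℝ)) j) (propDiv V) ≤ 1 / 2 :=
  (l1_phantomMedian_uniform_propDiv_le hn V fun i => (hV i).1).trans_eq (by norm_num)
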